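/- Let n = 3m+1 or n = 3m+2 with m ≥ 1. Define a Poisson bracket on rational functions of the variables a_i, b_i (i ∈ ZMod n) as the skew-symmetric biderivation with {a_i, a_j} = (∑_{k=1}^{m} (δ_{i,j+3k} − δ_{i,j−3k})) a_i a_j, {a_i, b_j} = 0, and {b_i, b_j} = (∑_{k=1}^{m} (δ_{i,j−3k} − δ_{i,j+3k})) b_i b_j. Then the rational functions x_i := a_{i−2}/(b_{i−2} b_{i−1}) and y_i := −b_{i−1}/(a_{i−2} a_{i−1}) satisfy: {x_i, x_{i+1}} = −x_i x_{i+1}; {y_i, y_{i+1}} = y_i y_{i+1}; {x_i, y_j} = 0 for all i, j; and {x_i, x_j} = 0 and {y_i, y_j} = 0 whenever j ∉ {i−1, i, i+1}. That is, in the (a, b)-coordinates the invariant Poisson bracket of the pentagram map takes the stated form. -/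

import Mathlib

open MvPolynomial

/-- The field of rational functions in the variables `a_i, b_i`
(`Sum.inl i ↦ a_i`, `Sum.inr i ↦ b_i`). -/
abbrev ABField (n : ℕ) : Type :=
  FractionRing (MvPolynomial (ZMod n ⊕ ZMod n) ℝ)

/-- The coordinate `a_i` as a rational function. -/
noncomputable def aR {n : ℕ} (i : ZMod n) : ABField n :=
  algebraMap (MvPolynomial (ZMod n ⊕ ZMod n) ℝ) (ABField n) (X (Sum.inl i))

/-- The coordinate `b_i` as a rational function. -/
noncomputable def bR {n : ℕ} (i : ZMod n) : ABField n :=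
  algebraMap (MvPolynomial (ZMod n ⊕ ZMod n) ℝ) (ABField n) (X (Sum.inr i))

/-! The bracket is log-canonical in the coordinates `a_i, b_i`, so the bracket of two Laurent
monomials in them is again log-canonical, with coefficient the pairing of their exponent vectors.
For the corner invariants this gives `{x_i, x_j} = -W(i-j) x_i x_j`, `{y_i, y_j} = W(i-j) y_i y_j`
and `{x_i, y_j} = 0`, where `W(d) = S(d-1) + S(d) + S(d+1)` and `S(d) = ∑_k (δ_{d,3k} - δ_{d,-3k})`.
For `d = s` with `0 ≤ s < n` one has `S(d) = I(s) - I(n - s)`, where `I` indicates the multiples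
of `3` in `[3, 3m]`. Since `3m < n ≤ 3m + 2`, three consecutive integers in `[1, n)` meet `I`
exactly once, so `W` vanishes off `d ∈ {-1, 0, 1}`, while `W(-1) = 1`. -/

open Finset

structure IsSkewBiderivation {K : Type*} [CommRing K] (B : K → K → K) : Prop where
  add_left : ∀ f g h, B (f + g) h = B f h + B g h
  skew : ∀ f g, B f g = -B g f
  leibniz : ∀ f g h, B f (g * h) = g * B f h + h * B f g

/-- `c` is the bracket `{log f, log g}`. -/
def HasLogBracket {K : Type*} [CommRing K] (B : K → K → K) (f g c : K) : Prop :=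
  B f g = c * (f * g)

section CommRing

variable {K : Type*} [CommRing K] {B : K → K → K} {f g h c d : K}

theorem IsSkewBiderivation.map_zero_left (hB : IsSkewBiderivation B) (g : K) : B 0 g = 0 := by
  simpa using hB.add_left 0 0 g

theorem IsSkewBiderivation.map_neg_left (hB : IsSkewBiderivation B) (f g : K) :
    B (-f) g = -B f g := by
  have h := hB.add_left f (-f) g
  rw [add_neg_cancel, hB.map_zero_left] at h
  linear_combination -h

theorem IsSkewBiderivation.map_one_right (hB : IsSkewBiderivation B) (f : K) : B f 1 = 0 := by
  simpa using hB.leibniz f 1 1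

namespace HasLogBracket

theorem symm (hB : IsSkewBiderivation B) (hfg : HasLogBracket B f g c) :
    HasLogBracket B g f (-c) := by
  unfold HasLogBracket at *
  rw [hB.skew, hfg]; ring

theorem mul_right (hB : IsSkewBiderivation B) (hg : HasLogBracket B f g c)
    (hh : HasLogBracket B f h d) : HasLogBracket B f (g * h) (c + d) := by
  unfold HasLogBracket at *
  rw [hB.leibniz, hg, hh]; ring

theorem mul_left (hB : IsSkewBiderivation B) (hf : HasLogBracket B f h c)
    (hg : HasLogBracket B g h d) : HasLogBracket B (f * g) h (c + d) := by
  simpa [add_comm] using ((hf.symm hB).mul_right hB (hg.symm hB)).symm hB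

theorem neg_left (hB : IsSkewBiderivation B) (hfg : HasLogBracket B f g c) :
    HasLogBracket B (-f) g c := by
  unfold HasLogBracket at *
  rw [hB.map_neg_left, hfg]; ring

theorem neg_right (hB : IsSkewBiderivation B) (hfg : HasLogBracket B f g c) :
    HasLogBracket B f (-g) c := by
  simpa using ((hfg.symm hB).neg_left hB).symm hB

end HasLogBracket

end CommRing

section Field

variable {K : Type*} [Field K] {B : K → K → K} {f g h c d : K}

theorem IsSkewBiderivation.map_inv_right (hB : IsSkewBiderivation B) (f : K) (hg : g ≠ 0) :
    B f g⁻¹ = -(B f g / g ^ 2) := by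
  have h := hB.leibniz f g g⁻¹
  rw [mul_inv_cancel₀ hg, hB.map_one_right] at h
  linear_combination (-g⁻¹) * h - B f g⁻¹ * mul_inv_cancel₀ hg

theorem HasLogBracket.div_right (hB : IsSkewBiderivation B) (hh0 : h ≠ 0)
    (hg : HasLogBracket B f g c) (hh : HasLogBracket B f h d) :
    HasLogBracket B f (g / h) (c - d) := by
  unfold HasLogBracket at *
  rw [div_eq_mul_inv, hB.leibniz, hB.map_inv_right f hh0, hg, hh]
  field_simp
  ring

theorem HasLogBracket.div_left (hB : IsSkewBiderivation B) (hg0 : g ≠ 0)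
    (hf : HasLogBracket B f h c) (hg : HasLogBracket B g h d) :
    HasLogBracket B (f / g) h (c - d) := by
  simpa [neg_add_eq_sub] using ((hf.symm hB).div_right hB hg0 (hg.symm hB)).symm hB

end Field

section CornerInvariants

variable {K ι : Type*} [Field K] [CommRing ι]

def cornerX (a b : ι → K) (i : ι) : K := a (i - 2) / (b (i - 2) * b (i - 1))

def cornerY (a b : ι → K) (i : ι) : K := -b (i - 1) / (a (i - 2) * a (i - 1))

structure IsLogCanonical (B : K → K → K) (a b S : ι → K) : Prop where
  a_a : ∀ i j, HasLogBracket B (a i) (a j) (S (i - j))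
  a_b : ∀ i j, HasLogBracket B (a i) (b j) 0
  b_b : ∀ i j, HasLogBracket B (b i) (b j) (-S (i - j))

namespace IsLogCanonical

variable {B : K → K → K} {a b S : ι → K}

theorem a_cornerX (hS : IsLogCanonical B a b S) (hB : IsSkewBiderivation B)
    (hb : ∀ i, b i ≠ 0) (i j : ι) :
    HasLogBracket B (a i) (cornerX a b j) (S (i - j + 2)) := by
  rw [cornerX]
  convert (hS.a_a i (j - 2)).div_right hB (mul_ne_zero (hb _) (hb _))
    ((hS.a_b i (j - 2)).mul_right hB (hS.a_b i (j - 1))) using 1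
  ring_nf

theorem b_cornerX (hS : IsLogCanonical B a b S) (hB : IsSkewBiderivation B)
    (hb : ∀ i, b i ≠ 0) (i j : ι) :
    HasLogBracket B (b i) (cornerX a b j) (S (i - j + 2) + S (i - j + 1)) := by
  rw [cornerX]
  convert ((hS.a_b (j - 2) i).symm hB).div_right hB (mul_ne_zero (hb _) (hb _))
    ((hS.b_b i (j - 2)).mul_right hB (hS.b_b i (j - 1))) using 1
  ring_nf

theorem a_cornerY (hS : IsLogCanonical B a b S) (hB : IsSkewBiderivation B)
    (ha : ∀ i, a i ≠ 0) (i j : ι) :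
    HasLogBracket B (a i) (cornerY a b j) (-(S (i - j + 2) + S (i - j + 1))) := by
  rw [cornerY]
  convert ((hS.a_b i (j - 1)).neg_right hB).div_right hB (mul_ne_zero (ha _) (ha _))
    ((hS.a_a i (j - 2)).mul_right hB (hS.a_a i (j - 1))) using 1
  ring_nf

theorem b_cornerY (hS : IsLogCanonical B a b S) (hB : IsSkewBiderivation B)
    (ha : ∀ i, a i ≠ 0) (i j : ι) :
    HasLogBracket B (b i) (cornerY a b j) (-S (i - j + 1)) := by
  rw [cornerY]
  convert ((hS.b_b i (j - 1)).neg_right hB).div_right hB (mul_ne_zero (ha _) (ha _))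
    (((hS.a_b (j - 2) i).symm hB).mul_right hB ((hS.a_b (j - 1) i).symm hB)) using 1
  ring_nf

theorem cornerX_cornerX (hS : IsLogCanonical B a b S) (hB : IsSkewBiderivation B)
    (hb : ∀ i, b i ≠ 0) (i j : ι) :
    HasLogBracket B (cornerX a b i) (cornerX a b j)
      (-(S (i - j - 1) + S (i - j) + S (i - j + 1))) := by
  rw [cornerX]
  convert (hS.a_cornerX hB hb (i - 2) j).div_left hB (mul_ne_zero (hb _) (hb _))
    ((hS.b_cornerX hB hb (i - 2) j).mul_left hB (hS.b_cornerX hB hb (i - 1) j)) using 1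
  ring_nf

theorem cornerY_cornerY (hS : IsLogCanonical B a b S) (hB : IsSkewBiderivation B)
    (ha : ∀ i, a i ≠ 0) (i j : ι) :
    HasLogBracket B (cornerY a b i) (cornerY a b j)
      (S (i - j - 1) + S (i - j) + S (i - j + 1)) := by
  rw [cornerY]
  convert ((hS.b_cornerY hB ha (i - 1) j).neg_left hB).div_left hB (mul_ne_zero (ha _) (ha _))
    ((hS.a_cornerY hB ha (i - 2) j).mul_left hB (hS.a_cornerY hB ha (i - 1) j)) using 1
  ring_nf

theorem cornerX_cornerY (hS : IsLogCanonical B a b S) (hB : IsSkewBiderivation B)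
    (ha : ∀ i, a i ≠ 0) (hb : ∀ i, b i ≠ 0) (i j : ι) :
    HasLogBracket B (cornerX a b i) (cornerY a b j) 0 := by
  rw [cornerX]
  convert (hS.a_cornerY hB ha (i - 2) j).div_left hB (mul_ne_zero (hb _) (hb _))
    ((hS.b_cornerY hB ha (i - 2) j).mul_left hB (hS.b_cornerY hB ha (i - 1) j)) using 1
  ring_nf

end IsLogCanonical

end CornerInvariants

section ShiftCoeff

def shiftCoeff (m n : ℕ) (d : ZMod n) : ℤ :=
  ∑ k ∈ Icc 1 m, ((if d = ((3 * k : ℕ) : ZMod n) then 1 else 0) -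
    (if d = -((3 * k : ℕ) : ZMod n) then 1 else 0))

def mulThreeIndicator (m s : ℕ) : ℤ := if 3 ∣ s ∧ 0 < s ∧ s ≤ 3 * m then 1 else 0

variable {m n : ℕ}

theorem sum_Icc_ite_eq_three_mul (s : ℕ) :
    ∑ k ∈ Icc 1 m, (if s = 3 * k then (1 : ℤ) else 0) = mulThreeIndicator m s := by
  unfold mulThreeIndicator
  split_ifs with hs
  · obtain ⟨⟨t, rfl⟩, _, _⟩ := hs
    rw [sum_eq_single_of_mem t (by simp; omega) fun k _ hk => if_neg (by omega), if_pos rfl]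
  · exact sum_eq_zero fun k hk => if_neg (by simp at hk; omega)

theorem mulThreeIndicator_eq_zero {s : ℕ} (hs : s < 3 ∨ 3 * m < s) :
    mulThreeIndicator m s = 0 :=
  if_neg (by omega)

theorem mulThreeIndicator_window {r : ℕ} (hr : 2 ≤ r) (hrm : r ≤ 3 * m + 1) :
    mulThreeIndicator m (r - 1) + mulThreeIndicator m r + mulThreeIndicator m (r + 1) = 1 := by
  unfold mulThreeIndicator
  split_ifs <;> omega

theorem natCast_eq_neg_natCast_iff {s t : ℕ} (hs : s < n) (ht : 0 < t) (htn : t < n) :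
    (s : ZMod n) = -(t : ZMod n) ↔ n - s = t := by
  rw [eq_neg_iff_add_eq_zero, ← Nat.cast_add, ZMod.natCast_eq_zero_iff]
  constructor
  · intro h
    have := Nat.eq_of_dvd_of_lt_two_mul (by omega) h (by omega)
    omega
  · intro h
    exact ⟨1, by omega⟩

theorem shiftCoeff_natCast (hmn : 3 * m < n) {s : ℕ} (hs : s < n) :
    shiftCoeff m n s = mulThreeIndicator m s - mulThreeIndicator m (n - s) := by
  rw [shiftCoeff, sum_sub_distrib, ← sum_Icc_ite_eq_three_mul, ← sum_Icc_ite_eq_three_mul]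
  congr 1 <;> refine sum_congr rfl fun k hk => if_congr ?_ rfl rfl <;> simp only [mem_Icc] at hk
  · rw [ZMod.natCast_eq_natCast_iff', Nat.mod_eq_of_lt hs, Nat.mod_eq_of_lt (by omega)]
  · exact natCast_eq_neg_natCast_iff hs (by omega) (by omega)

theorem natCast_sub_one_eq_neg_one (hn : 0 < n) : (((n - 1 : ℕ) : ZMod n)) = -1 := by
  rw [Nat.cast_sub hn, ZMod.natCast_self, Nat.cast_one, zero_sub]

theorem shiftCoeff_window_neg_one (hm : 1 ≤ m) (hn : n = 3 * m + 1 ∨ n = 3 * m + 2) :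
    shiftCoeff m n (-1 - 1) + shiftCoeff m n (-1) + shiftCoeff m n (-1 + 1) = 1 := by
  have hmn : 3 * m < n := by omega
  have h2 : (-1 - 1 : ZMod n) = ((n - 1 - 1 : ℕ) : ZMod n) := by
    rw [Nat.cast_sub (by omega), natCast_sub_one_eq_neg_one (by omega), Nat.cast_one]
  have hw := mulThreeIndicator_window (m := m) (r := n - 1) (by omega) (by omega)
  rw [Nat.sub_add_cancel (by omega), mulThreeIndicator_eq_zero (s := n) (by omega)] at hw
  rw [neg_add_cancel, h2, ← natCast_sub_one_eq_neg_one (by omega), ← Nat.cast_zero,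
    shiftCoeff_natCast hmn (by omega), shiftCoeff_natCast hmn (by omega),
    shiftCoeff_natCast hmn (by omega), Nat.sub_zero,
    mulThreeIndicator_eq_zero (s := n - (n - 1 - 1)) (by omega),
    mulThreeIndicator_eq_zero (s := n - (n - 1)) (by omega),
    mulThreeIndicator_eq_zero (s := 0) (by omega), mulThreeIndicator_eq_zero (s := n) (by omega)]
  linear_combination hw

theorem shiftCoeff_window_eq_zero (hn : n = 3 * m + 1 ∨ n = 3 * m + 2) {d : ZMod n}
    (hd₁ : d ≠ -1) (hd₀ : d ≠ 0) (hd₁' : d ≠ 1) :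
    shiftCoeff m n (d - 1) + shiftCoeff m n d + shiftCoeff m n (d + 1) = 0 := by
  have hmn : 3 * m < n := by omega
  have : NeZero n := ⟨by omega⟩
  obtain ⟨r, hr, rfl⟩ : ∃ r < n, (r : ZMod n) = d := ⟨d.val, d.val_lt, d.natCast_zmod_val⟩
  have hr₀ : r ≠ 0 := by rintro rfl; exact hd₀ Nat.cast_zero
  have hr₁ : r ≠ 1 := by rintro rfl; exact hd₁' Nat.cast_one
  have hr₂ : r ≠ n - 1 := by rintro rfl; exact hd₁ (natCast_sub_one_eq_neg_one (by omega))
  rw [← Nat.cast_pred (by omega), ← Nat.cast_succ, shiftCoeff_natCast hmn (by omega),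
    shiftCoeff_natCast hmn hr, shiftCoeff_natCast hmn (by omega),
    show n - (r - 1) = n - r + 1 by omega, show n - (r + 1) = n - r - 1 by omega]
  linear_combination mulThreeIndicator_window (m := m) (r := r) (by omega) (by omega) -
    mulThreeIndicator_window (m := m) (r := n - r) (by omega) (by omega)

end ShiftCoeff

theorem aR_ne_zero {n : ℕ} (i : ZMod n) : aR i ≠ 0 := fun h =>
  X_ne_zero _ (IsFractionRing.to_map_eq_zero_iff.mp h)

theorem bR_ne_zero {n : ℕ} (i : ZMod n) : bR i ≠ 0 := fun h =>
  X_ne_zero _ (IsFractionRing.to_map_eq_zero_iff.mp h)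

theorem cast_shiftCoeff_sub {R : Type*} [Ring R] {m n : ℕ} (i j : ZMod n) :
    (shiftCoeff m n (i - j) : R) = ∑ k ∈ Icc 1 m,
      ((if i = j + ((3 * k : ℕ) : ZMod n) then (1 : R) else 0) -
        (if i = j - ((3 * k : ℕ) : ZMod n) then 1 else 0)) := by
  simp only [shiftCoeff, Int.cast_sum, Int.cast_sub, Int.cast_ite, Int.cast_one, Int.cast_zero,
    sub_eq_iff_eq_add', ← sub_eq_add_neg]

theorem stmt_17 (m : ℕ) (hm : 1 ≤ m) (n : ℕ)
    (hn : n = 3 * m + 1 ∨ n = 3 * m + 2)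
    (B : ABField n → ABField n → ABField n)
    (haddl : ∀ f g h : ABField n, B (f + g) h = B f h + B g h)
    (hskew : ∀ f g : ABField n, B f g = -B g f)
    (hleib : ∀ f g h : ABField n, B f (g * h) = g * B f h + h * B f g)
    (haa : ∀ i j : ZMod n, B (aR i) (aR j) =
      (∑ k ∈ Finset.Icc 1 m,
        ((if i = j + ((3 * k : ℕ) : ZMod n) then (1 : ABField n) else 0) -
          (if i = j - ((3 * k : ℕ) : ZMod n) then 1 else 0))) * (aR i * aR j))
    (hab : ∀ i j : ZMod n, B (aR i) (bR j) = 0)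
    (hbb : ∀ i j : ZMod n, B (bR i) (bR j) =
      (∑ k ∈ Finset.Icc 1 m,
        ((if i = j - ((3 * k : ℕ) : ZMod n) then (1 : ABField n) else 0) -
          (if i = j + ((3 * k : ℕ) : ZMod n) then 1 else 0))) * (bR i * bR j))
    (x y : ZMod n → ABField n)
    (hx : ∀ i, x i = aR (i - 2) / (bR (i - 2) * bR (i - 1)))
    (hy : ∀ i, y i = -bR (i - 1) / (aR (i - 2) * aR (i - 1))) :
    ∀ i j : ZMod n,
      B (x i) (x (i + 1)) = -(x i * x (i + 1)) ∧
      B (y i) (y (i + 1)) = y i * y (i + 1) ∧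
      B (x i) (y j) = 0 ∧
      (j ≠ i - 1 → j ≠ i → j ≠ i + 1 → B (x i) (x j) = 0 ∧ B (y i) (y j) = 0) := by
  obtain rfl : x = cornerX aR bR := funext hx
  obtain rfl : y = cornerY aR bR := funext hy
  have hB : IsSkewBiderivation B := ⟨haddl, hskew, hleib⟩
  have hS : IsLogCanonical B aR bR fun d => (shiftCoeff m n d : ABField n) := by
    refine ⟨fun i j => ?_, fun i j => ?_, fun i j => ?_⟩ <;> rw [HasLogBracket]
    · rw [haa, cast_shiftCoeff_sub]
    · rw [hab, zero_mul]
    · rw [hbb, cast_shiftCoeff_sub, ← sum_neg_distrib]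
      simp only [neg_sub]
  have hW₁ : (shiftCoeff m n (-1 - 1) : ABField n) + shiftCoeff m n (-1) + shiftCoeff m n (-1 + 1)
      = 1 := by exact_mod_cast shiftCoeff_window_neg_one hm hn
  intro i j
  have hii : i - (i + 1) = -1 := by ring
  refine ⟨?_, ?_, hS.cornerX_cornerY hB aR_ne_zero bR_ne_zero i j |>.trans (zero_mul _),
    fun hj₁ hj₀ hj₁' => ?_⟩
  · rw [hS.cornerX_cornerX hB bR_ne_zero i (i + 1), hii, hW₁, neg_one_mul]
  · rw [hS.cornerY_cornerY hB aR_ne_zero i (i + 1), hii, hW₁, one_mul]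
  · have hW₀ : (shiftCoeff m n (i - j - 1) : ABField n) + shiftCoeff m n (i - j)
        + shiftCoeff m n (i - j + 1) = 0 := by
      exact_mod_cast shiftCoeff_window_eq_zero hn (d := i - j) (by grind) (by grind) (by grind)
    rw [hS.cornerX_cornerX hB bR_ne_zero, hS.cornerY_cornerY hB aR_ne_zero, hW₀]
    simp
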